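/- arXiv:1410.1184 — 6 statements merged into one kernel-verified Lean document; each statement's English description precedes it below -/
import Mathlib

section
/- Let p ≥ 1, ρ > 0, and let Y be a p×p complex Hermitian matrix with spectral decomposition Y = V D V^H, where V is unitary and D = diag(d_1,…,d_p) contains the (real) eigenvalues of Y. Define d̃_i := min{ ( -d_i + √(d_i² + 4ρ) ) / (2ρ), 1 } for i ∈ [p] and X* := V diag(d̃_1,…,d̃_p) V^H. Then X* is Hermitian with 0 ≺ X* ⪯ I, and for every Hermitian p×p matrix X with 0 ≺ X ⪯ I it holds that -log det X* + Re tr(Y X*) + (ρ/2)‖X*‖_F² ≤ -log det X + Re tr(Y X) + (ρ/2)‖X‖_F². (This is the closed-form X-update of the ADMM algorithm, Proposition 1, first part, stated for a single frequency bin.) -/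
open Matrix
open scoped ComplexOrder

/-- Squared Frobenius norm of a single complex matrix. -/
noncomputable def frobSq {p : ℕ} (M : Matrix (Fin p) (Fin p) ℂ) : ℝ :=
  ∑ i, ∑ j, ‖M i j‖ ^ 2

/-- The norm ‖X_{i,j}[·]‖ of the (i,j) entry group of a matrix sequence. -/
noncomputable def entryNorm {p F : ℕ} (X : Fin F → Matrix (Fin p) (Fin p) ℂ)
    (i j : Fin p) : ℝ :=
  Real.sqrt ((1 / (F : ℝ)) * ∑ f, ‖X f i j‖ ^ 2)

/-- The ℓ₁-norm ‖X‖₁ of a matrix sequence. -/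
noncomputable def l1Norm {p F : ℕ} (X : Fin F → Matrix (Fin p) (Fin p) ℂ) : ℝ :=
  ∑ i, ∑ j, entryNorm X i j

/-- The inner product ⟨A[·],B[·]⟩ (real part). -/
noncomputable def seqInner {p F : ℕ} (A B : Fin F → Matrix (Fin p) (Fin p) ℂ) : ℝ :=
  (1 / (F : ℝ)) * ∑ f, ((A f * B f).trace).re

/-- A{X} = (1/F) ∑_f log det X[f]. -/
noncomputable def Afun {p F : ℕ} (X : Fin F → Matrix (Fin p) (Fin p) ℂ) : ℝ :=
  (1 / (F : ℝ)) * ∑ f, Real.log (((X f).det).re)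

/-- The constraint set 𝒞: sequences of Hermitian matrices with 0 ≺ X[f] ⪯ I. -/
def memC {p F : ℕ} (X : Fin F → Matrix (Fin p) (Fin p) ℂ) : Prop :=
  ∀ f, (X f).IsHermitian ∧ (X f).PosDef ∧
    ((1 : Matrix (Fin p) (Fin p) ℂ) - X f).PosSemidef

/-- The gLASSO objective J(X) = -A{X} + ⟨Ŝ,X⟩ + λ‖X‖₁. -/
noncomputable def glassoObj {p F : ℕ} (Shat : Fin F → Matrix (Fin p) (Fin p) ℂ)
    (lam : ℝ) (X : Fin F → Matrix (Fin p) (Fin p) ℂ) : ℝ :=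
  - Afun X + seqInner Shat X + lam * l1Norm X

-- X_𝒮[·]: the sequence restricted to the index set 𝒮.
open Classical in
noncomputable def restrictSeq {p F : ℕ} (S : Set (Fin p × Fin p))
    (X : Fin F → Matrix (Fin p) (Fin p) ℂ) : Fin F → Matrix (Fin p) (Fin p) ℂ :=
  fun f => Matrix.of fun i j => if (i, j) ∈ S then X f i j else 0

/-- Generalized support of a matrix sequence. -/
def gsupp {p F : ℕ} (X : Fin F → Matrix (Fin p) (Fin p) ℂ) : Set (Fin p × Fin p) :=
  {ij | ∃ f, X f ij.1 ij.2 ≠ 0}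

/-!
Conjugation by `V` reduces the problem to `Y = diagonal d`, because `log det`, the trace
pairing and the Frobenius norm are unitarily invariant. For a feasible `Z`, Hadamard's
inequality `det Z ≤ ∏ Z i i` and `‖Z‖_F² ≥ ∑ (Z i i)²` bound the objective below by the
separable sum `∑ g_i (Z i i)` with `g_i x = -log x + d_i x + ρ/2 x²` and `0 < Z i i ≤ 1`.
Each `g_i` is convex and `x g_i'(x) = ρ x² + d_i x - 1`, so its minimum over `(0, 1]` is the
positive root of this quadratic clipped at `1`, which is `d̃_i`; at `X*` every bound is an
equality.
-/

namespace Matrix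

variable {n : Type*} [Fintype n] [DecidableEq n] {V : Matrix n n ℂ}

theorem PosDef.det_re_le_exp_trace_re_sub_card {N : Matrix n n ℂ} (hN : N.PosDef) :
    N.det.re ≤ Real.exp (N.trace.re - Fintype.card n) := by
  have hH := hN.isHermitian
  have hdet : N.det.re = ∏ i, hH.eigenvalues i := by
    rw [hH.det_eq_prod_eigenvalues]; norm_cast
  have htrace : N.trace.re = ∑ i, hH.eigenvalues i := by
    rw [hH.trace_eq_sum_eigenvalues]; norm_cast
  rw [hdet, htrace]
  calc ∏ i, hH.eigenvalues i ≤ ∏ i, Real.exp (hH.eigenvalues i - 1) :=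
        Finset.prod_le_prod (fun i _ => (hN.eigenvalues_pos i).le)
          fun i _ => by linarith [Real.add_one_le_exp (hH.eigenvalues i - 1)]
    _ = Real.exp (∑ i, hH.eigenvalues i - Fintype.card n) := by
        rw [← Real.exp_sum, Finset.sum_sub_distrib]; simp

theorem PosDef.det_re_le_prod_diag_re {Z : Matrix n n ℂ} (hZ : Z.PosDef) :
    Z.det.re ≤ ∏ i, (Z i i).re := by
  set z : n → ℝ := fun i => (Z i i).re
  have hz : ∀ i, 0 < z i := fun i => (Complex.lt_def.mp (hZ.diag_pos (i := i))).1
  set s : n → ℝ := fun i => (Real.sqrt (z i))⁻¹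
  have hs : ∀ i, s i * s i * z i = 1 := fun i => by
    simp only [s, ← mul_inv, Real.mul_self_sqrt (hz i).le, inv_mul_cancel₀ (hz i).ne']
  -- `S * Z * S` has unit diagonal, so AM-GM on its eigenvalues gives `det (S * Z * S) ≤ 1`.
  set S : Matrix n n ℂ := diagonal fun i => (s i : ℂ)
  have hS : star S = S := by
    simp [S, star_eq_conjTranspose, diagonal_conjTranspose]
  have hSunit : IsUnit S := by
    refine isUnit_diagonal.mpr (Pi.isUnit_iff.mpr fun i => ?_)
    exact (Complex.ofReal_ne_zero.mpr (inv_ne_zero (Real.sqrt_pos.mpr (hz i)).ne')).isUnit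
  have hN : (S * Z * S).PosDef := by
    simpa [hS] using (IsUnit.posDef_star_left_conjugate_iff hSunit).mpr hZ
  have htrace : (S * Z * S).trace.re = Fintype.card n := by
    simp only [trace, S, diag, diagonal_mul, mul_diagonal, Complex.re_sum, Complex.mul_re,
      Complex.ofReal_re, Complex.ofReal_im, zero_mul, mul_zero, sub_zero]
    calc ∑ i, s i * z i * s i = ∑ _i : n, (1 : ℝ) :=
          Finset.sum_congr rfl fun i _ => by rw [← hs i]; ring
      _ = Fintype.card n := by simp
  have hdet : (S * Z * S).det.re = (∏ i, s i) ^ 2 * Z.det.re := by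
    simp [S, det_mul, det_diagonal, ← Complex.ofReal_prod, Complex.mul_re]
    ring
  have hprod : (∏ i, s i) ^ 2 * ∏ i, z i = 1 := by
    rw [sq, ← Finset.prod_mul_distrib, ← Finset.prod_mul_distrib]
    exact Finset.prod_eq_one fun i _ => hs i
  have := hN.det_re_le_exp_trace_re_sub_card
  rw [htrace, hdet, sub_self, Real.exp_zero] at this
  have hP : 0 < ∏ i, z i := Finset.prod_pos fun i _ => hz i
  nlinarith

theorem mul_conjTranspose_of_mem_unitaryGroup (hV : V ∈ unitaryGroup n ℂ) : V * Vᴴ = 1 :=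
  mem_unitaryGroup_iff.mp hV

theorem conjTranspose_mul_of_mem_unitaryGroup (hV : V ∈ unitaryGroup n ℂ) : Vᴴ * V = 1 :=
  mem_unitaryGroup_iff'.mp hV

theorem det_conj_of_mem_unitaryGroup (hV : V ∈ unitaryGroup n ℂ) (A : Matrix n n ℂ) :
    (V * A * Vᴴ).det = A.det := by
  rw [det_mul, det_mul, mul_right_comm, ← det_mul, mul_conjTranspose_of_mem_unitaryGroup hV,
    det_one, one_mul]

theorem trace_conj_of_mem_unitaryGroup (hV : V ∈ unitaryGroup n ℂ) (A : Matrix n n ℂ) :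
    (V * A * Vᴴ).trace = A.trace := by
  rw [trace_mul_cycle, conjTranspose_mul_of_mem_unitaryGroup hV, one_mul]

theorem one_sub_conj_of_mem_unitaryGroup (hV : V ∈ unitaryGroup n ℂ) (A : Matrix n n ℂ) :
    1 - V * A * Vᴴ = V * (1 - A) * Vᴴ := by
  rw [mul_sub, sub_mul, mul_one, mul_conjTranspose_of_mem_unitaryGroup hV]

theorem conj_mul_conj_of_mem_unitaryGroup (hV : V ∈ unitaryGroup n ℂ) (A B : Matrix n n ℂ) :
    V * A * Vᴴ * (V * B * Vᴴ) = V * (A * B) * Vᴴ := by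
  simp only [mul_assoc]
  rw [← mul_assoc Vᴴ V, conjTranspose_mul_of_mem_unitaryGroup hV, one_mul]

end Matrix

noncomputable def posRoot (ρ d : ℝ) : ℝ := (-d + Real.sqrt (d ^ 2 + 4 * ρ)) / (2 * ρ)

noncomputable def clippedRoot (ρ d : ℝ) : ℝ := min (posRoot ρ d) 1

noncomputable def scalarObjective (ρ d x : ℝ) : ℝ := -Real.log x + d * x + ρ / 2 * x ^ 2

section Scalar

variable {ρ : ℝ} (hρ : 0 < ρ) (d : ℝ)
include hρ

theorem abs_lt_sqrt_sq_add_four_mul : |d| < Real.sqrt (d ^ 2 + 4 * ρ) :=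
  Real.lt_sqrt_of_sq_lt (by rw [sq_abs]; linarith)

theorem two_mul_mul_posRoot : 2 * ρ * posRoot ρ d = -d + Real.sqrt (d ^ 2 + 4 * ρ) := by
  unfold posRoot; field_simp

theorem posRoot_pos : 0 < posRoot ρ d :=
  div_pos (by linarith [le_abs_self d, abs_lt_sqrt_sq_add_four_mul hρ d]) (by positivity)

theorem mul_posRoot_sq_add_mul_posRoot : ρ * posRoot ρ d ^ 2 + d * posRoot ρ d = 1 := by
  have hsq := Real.sq_sqrt (show 0 ≤ d ^ 2 + 4 * ρ by positivity)
  have h := two_mul_mul_posRoot hρ d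
  have : (2 * ρ) * (ρ * posRoot ρ d ^ 2 + d * posRoot ρ d - 1) = 0 := by
    linear_combination
      (1 / 2) * ((2 * ρ * posRoot ρ d + Real.sqrt (d ^ 2 + 4 * ρ) + d) * h + hsq)
  linarith [(mul_eq_zero.mp this).resolve_left (by positivity)]

theorem clippedRoot_pos : 0 < clippedRoot ρ d := lt_min (posRoot_pos hρ d) one_pos

omit hρ in
theorem clippedRoot_le_one : clippedRoot ρ d ≤ 1 := min_le_right _ _

theorem clippedRoot_optimality {z : ℝ} (hz : z ≤ 1) :
    0 ≤ (z - clippedRoot ρ d) * (ρ * clippedRoot ρ d ^ 2 + d * clippedRoot ρ d - 1) := by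
  have hroot := mul_posRoot_sq_add_mul_posRoot hρ d
  rcases le_or_gt (posRoot ρ d) 1 with hr | hr
  · rw [clippedRoot, min_eq_left hr, hroot, sub_self, mul_zero]
  · rw [clippedRoot, min_eq_right hr.le]
    have hfactor : ρ * 1 ^ 2 + d * 1 - 1 = (1 - posRoot ρ d) * (ρ * (1 + posRoot ρ d) + d) := by
      linear_combination hroot
    have : 0 < ρ * (1 + posRoot ρ d) + d := by
      linarith [two_mul_mul_posRoot hρ d, neg_abs_le d, abs_lt_sqrt_sq_add_four_mul hρ d]
    rw [hfactor]
    exact mul_nonneg_of_nonpos_of_nonpos (by linarith)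
      (mul_nonpos_of_nonpos_of_nonneg (by linarith) this.le)

theorem scalarObjective_clippedRoot_le {z : ℝ} (hz0 : 0 < z) (hz1 : z ≤ 1) :
    scalarObjective ρ d (clippedRoot ρ d) ≤ scalarObjective ρ d z := by
  set t := clippedRoot ρ d
  have ht : 0 < t := clippedRoot_pos hρ d
  have hlog : Real.log z - Real.log t ≤ z / t - 1 := by
    rw [← Real.log_div hz0.ne' ht.ne']; exact Real.log_le_sub_one_of_pos (div_pos hz0 ht)
  have hexpand : -(z / t - 1) + d * (z - t) + ρ / 2 * (z ^ 2 - t ^ 2)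
      = (z - t) * (ρ * t ^ 2 + d * t - 1) / t + ρ / 2 * (z - t) ^ 2 := by
    field_simp; ring
  have : 0 ≤ (z - t) * (ρ * t ^ 2 + d * t - 1) / t + ρ / 2 * (z - t) ^ 2 :=
    add_nonneg (div_nonneg (clippedRoot_optimality hρ d hz1) ht.le) (by positivity)
  unfold scalarObjective
  linarith

end Scalar

theorem frobSq_eq_re_trace {p : ℕ} (M : Matrix (Fin p) (Fin p) ℂ) :
    frobSq M = (Mᴴ * M).trace.re := by
  simp only [frobSq, trace, diag, mul_apply, conjTranspose_apply, Complex.re_sum]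
  rw [Finset.sum_comm]
  refine Finset.sum_congr rfl fun i _ => Finset.sum_congr rfl fun j _ => ?_
  rw [Complex.sq_norm, Complex.normSq_apply]
  simp [Complex.mul_re]

theorem sum_sq_re_diag_le_frobSq {p : ℕ} (M : Matrix (Fin p) (Fin p) ℂ) :
    ∑ i, (M i i).re ^ 2 ≤ frobSq M := by
  refine Finset.sum_le_sum fun i _ => ?_
  calc (M i i).re ^ 2 ≤ ‖M i i‖ ^ 2 := by
        rw [Complex.sq_norm, Complex.normSq_apply]; nlinarith [sq_nonneg (M i i).im]
    _ ≤ ∑ j, ‖M i j‖ ^ 2 :=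
        Finset.single_le_sum (f := fun j => ‖M i j‖ ^ 2) (fun j _ => by positivity)
          (Finset.mem_univ i)

noncomputable def admmXObjective {p : ℕ} (Y : Matrix (Fin p) (Fin p) ℂ) (ρ : ℝ)
    (X : Matrix (Fin p) (Fin p) ℂ) : ℝ :=
  -Real.log X.det.re + (Y * X).trace.re + ρ / 2 * frobSq X

section Objective

variable {p : ℕ} (ρ : ℝ) (d : Fin p → ℝ)

theorem admmXObjective_conj {V : Matrix (Fin p) (Fin p) ℂ} (hV : V ∈ unitaryGroup (Fin p) ℂ)
    (Y Z : Matrix (Fin p) (Fin p) ℂ) :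
    admmXObjective (V * Y * Vᴴ) ρ (V * Z * Vᴴ) = admmXObjective Y ρ Z := by
  have hconjT : (V * Z * Vᴴ)ᴴ = V * Zᴴ * Vᴴ := by
    simp only [conjTranspose_mul, conjTranspose_conjTranspose, mul_assoc]
  simp only [admmXObjective, frobSq_eq_re_trace, hconjT, conj_mul_conj_of_mem_unitaryGroup hV,
    det_conj_of_mem_unitaryGroup hV, trace_conj_of_mem_unitaryGroup hV]

theorem admmXObjective_diagonal {t : Fin p → ℝ} (ht : ∀ i, 0 < t i) :
    admmXObjective (diagonal fun i => (d i : ℂ)) ρ (diagonal fun i => (t i : ℂ)) =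
      ∑ i, scalarObjective ρ (d i) (t i) := by
  have hfrob : frobSq (diagonal fun i => (t i : ℂ)) = ∑ i, t i ^ 2 := by
    simp [frobSq_eq_re_trace, diagonal_conjTranspose, trace_diagonal, sq]
  simp only [admmXObjective, scalarObjective, det_diagonal, diagonal_mul_diagonal, trace_diagonal,
    hfrob]
  rw [← Complex.ofReal_prod, Complex.ofReal_re, Real.log_prod fun i _ => (ht i).ne']
  simp only [← Complex.ofReal_mul, ← Complex.ofReal_sum, Complex.ofReal_re,
    Finset.sum_add_distrib, Finset.sum_neg_distrib, Finset.mul_sum]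

theorem sum_scalarObjective_le_admmXObjective {Z : Matrix (Fin p) (Fin p) ℂ} (hZ : Z.PosDef)
    (hρ : 0 ≤ ρ) :
    ∑ i, scalarObjective ρ (d i) (Z i i).re ≤ admmXObjective (diagonal fun i => (d i : ℂ)) ρ Z := by
  have hz : ∀ i, 0 < (Z i i).re := fun i => (Complex.lt_def.mp (hZ.diag_pos (i := i))).1
  have hlog : Real.log Z.det.re ≤ ∑ i, Real.log (Z i i).re := by
    rw [← Real.log_prod fun i _ => (hz i).ne']
    exact Real.log_le_log (Complex.lt_def.mp hZ.det_pos).1 hZ.det_re_le_prod_diag_re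
  have htrace : ((diagonal fun i => (d i : ℂ)) * Z).trace.re = ∑ i, d i * (Z i i).re := by
    simp [trace, diagonal_mul, Complex.re_sum]
  have hfrob := mul_le_mul_of_nonneg_left (sum_sq_re_diag_le_frobSq Z) (by positivity : 0 ≤ ρ / 2)
  simp only [admmXObjective, scalarObjective, Finset.sum_add_distrib, Finset.sum_neg_distrib,
    ← Finset.mul_sum, htrace]
  linarith

end Objective

theorem stmt_0_general (p : ℕ) (ρ : ℝ) (hρ : 0 < ρ)
    (Y V : Matrix (Fin p) (Fin p) ℂ) (d : Fin p → ℝ)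
    (hV : V ∈ Matrix.unitaryGroup (Fin p) ℂ)
    (hY : Y = V * Matrix.diagonal (fun i => (d i : ℂ)) * Vᴴ)
    (dt : Fin p → ℝ)
    (hdt : ∀ i, dt i = min ((-(d i) + Real.sqrt ((d i) ^ 2 + 4 * ρ)) / (2 * ρ)) 1)
    (Xstar : Matrix (Fin p) (Fin p) ℂ)
    (hXstar : Xstar = V * Matrix.diagonal (fun i => (dt i : ℂ)) * Vᴴ) :
    Xstar.IsHermitian ∧ Xstar.PosDef ∧
      ((1 : Matrix (Fin p) (Fin p) ℂ) - Xstar).PosSemidef ∧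
      ∀ X : Matrix (Fin p) (Fin p) ℂ, X.IsHermitian → X.PosDef →
        ((1 : Matrix (Fin p) (Fin p) ℂ) - X).PosSemidef →
        - Real.log (Xstar.det.re) + ((Y * Xstar).trace).re + (ρ / 2) * frobSq Xstar ≤
          - Real.log (X.det.re) + ((Y * X).trace).re + (ρ / 2) * frobSq X := by
  have hdt' : ∀ i, dt i = clippedRoot ρ (d i) := hdt
  have hdt0 : ∀ i, 0 < dt i := fun i => hdt' i ▸ clippedRoot_pos hρ (d i)
  have hVunit : IsUnit V := Unitary.isUnit_coe (U := ⟨V, hV⟩)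
  have hXstarPD : Xstar.PosDef := by
    rw [hXstar, ← star_eq_conjTranspose, hVunit.posDef_star_right_conjugate_iff]
    exact PosDef.diagonal fun i => Complex.zero_lt_real.mpr (hdt0 i)
  have hXstar1 : (1 - Xstar).PosSemidef := by
    rw [hXstar, one_sub_conj_of_mem_unitaryGroup hV, ← diagonal_one, diagonal_sub]
    refine PosSemidef.mul_mul_conjTranspose_same (PosSemidef.diagonal fun i => ?_) V
    have := hdt' i ▸ clippedRoot_le_one (d i)
    simpa using Complex.real_le_real.mpr this
  refine ⟨hXstarPD.isHermitian, hXstarPD, hXstar1, fun X _ hX hX1 => ?_⟩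
  set Z := Vᴴ * X * V
  have hXZ : X = V * Z * Vᴴ := by
    simp only [Z, ← mul_assoc, mul_conjTranspose_of_mem_unitaryGroup hV, one_mul]
    rw [mul_assoc, mul_conjTranspose_of_mem_unitaryGroup hV, mul_one]
  have hZ : Z.PosDef := hX.conjTranspose_mul_mul_same (mulVec_injective_of_isUnit hVunit)
  have hZ1 : ∀ i, (Z i i).re ≤ 1 := fun i => by
    have h := (hX1.conjTranspose_mul_mul_same V).diag_nonneg (i := i)
    rw [mul_sub, sub_mul, mul_one, conjTranspose_mul_of_mem_unitaryGroup hV] at h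
    simpa using (Complex.le_def.mp h).1
  show admmXObjective Y ρ Xstar ≤ admmXObjective Y ρ X
  rw [hY, hXstar, hXZ, admmXObjective_conj ρ hV, admmXObjective_conj ρ hV,
    admmXObjective_diagonal ρ d hdt0]
  calc ∑ i, scalarObjective ρ (d i) (dt i) ≤ ∑ i, scalarObjective ρ (d i) (Z i i).re :=
        Finset.sum_le_sum fun i _ => hdt' i ▸
          scalarObjective_clippedRoot_le hρ (d i) (Complex.lt_def.mp (hZ.diag_pos (i := i))).1
            (hZ1 i)
    _ ≤ _ := sum_scalarObjective_le_admmXObjective ρ d hZ hρ.le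

/-- closed-form X-update of the ADMM algorithm (Prop. 1, first part),
for a single frequency bin. -/
theorem stmt_0 (p : ℕ) (hp : 1 ≤ p) (ρ : ℝ) (hρ : 0 < ρ)
    (Y V : Matrix (Fin p) (Fin p) ℂ) (d : Fin p → ℝ)
    (hV : V ∈ Matrix.unitaryGroup (Fin p) ℂ)
    (hY : Y = V * Matrix.diagonal (fun i => (d i : ℂ)) * Vᴴ)
    (dt : Fin p → ℝ)
    (hdt : ∀ i, dt i = min ((-(d i) + Real.sqrt ((d i) ^ 2 + 4 * ρ)) / (2 * ρ)) 1)
    (Xstar : Matrix (Fin p) (Fin p) ℂ)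
    (hXstar : Xstar = V * Matrix.diagonal (fun i => (dt i : ℂ)) * Vᴴ) :
    Xstar.IsHermitian ∧ Xstar.PosDef ∧
      ((1 : Matrix (Fin p) (Fin p) ℂ) - Xstar).PosSemidef ∧
      ∀ X : Matrix (Fin p) (Fin p) ℂ, X.IsHermitian → X.PosDef →
        ((1 : Matrix (Fin p) (Fin p) ℂ) - X).PosSemidef →
        - Real.log (Xstar.det.re) + ((Y * Xstar).trace).re + (ρ / 2) * frobSq Xstar ≤
          - Real.log (X.det.re) + ((Y * X).trace).re + (ρ / 2) * frobSq X :=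
  stmt_0_general p ρ hρ Y V d hV hY dt hdt Xstar hXstar
end

section
/- Let n ≥ 1, κ > 0 and y ∈ ℂⁿ. Define z* := (1 - κ/‖y‖)₊ · y if y ≠ 0 and z* := 0 if y = 0, where a₊ := max{a,0} and ‖·‖ is the Euclidean norm on ℂⁿ. Then for every z ∈ ℂⁿ: κ‖z*‖ + (1/2)‖z* - y‖² ≤ κ‖z‖ + (1/2)‖z - y‖². (This is the block soft-thresholding operation solving the ADMM Z-update of Proposition 1, stated for a single entry group.) -/
open Matrix
open scoped ComplexOrder

/-!
Only norms matter. By the reverse triangle inequality `‖z - y‖ ≥ |‖z‖ - ‖y‖|` the objective at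
`z` is at least the scalar objective `κ s + (s - ‖y‖)² / 2` at `s = ‖z‖ ≥ 0`, whose minimum over
`s ≥ 0` is attained at `s = (‖y‖ - κ)₊`. The point `z*` is a nonnegative multiple of `y` with exactly
this norm, so it attains equality in both steps.
-/

noncomputable def softThreshold (κ r : ℝ) : ℝ :=
  max (r - κ) 0

theorem softThreshold_isMinOn (κ r : ℝ) :
    IsMinOn (fun s => κ * s + (1 / 2) * (s - r) ^ 2) (Set.Ici 0) (softThreshold κ r) := by
  intro s (hs : 0 ≤ s)
  change κ * max (r - κ) 0 + (1 / 2) * (max (r - κ) 0 - r) ^ 2 ≤ κ * s + (1 / 2) * (s - r) ^ 2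
  rcases le_total r κ with hrκ | hκr
  · rw [max_eq_right (by linarith)]
    nlinarith
  · rw [max_eq_left (by linarith)]
    nlinarith [sq_nonneg (s - (r - κ))]

section BlockSoftThreshold

variable {E : Type*} [SeminormedAddCommGroup E] [NormedSpace ℝ E]

/-- At `y = 0` the junk value `κ / 0 = 0` is harmless: the factor `y` vanishes. -/
noncomputable def blockSoftThreshold (κ : ℝ) (y : E) : E :=
  max (1 - κ / ‖y‖) 0 • y

theorem norm_smul_sub_self {c : ℝ} (hc : 0 ≤ c) (y : E) : ‖c • y - y‖ = |‖c • y‖ - ‖y‖| := by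
  have hsub : c • y - y = (c - 1) • y := by rw [sub_smul, one_smul]
  rw [hsub, norm_smul, norm_smul, Real.norm_of_nonneg hc, Real.norm_eq_abs, ← sub_one_mul, abs_mul,
    abs_norm]

theorem norm_blockSoftThreshold {κ : ℝ} (hκ : 0 ≤ κ) (y : E) :
    ‖blockSoftThreshold κ y‖ = softThreshold κ ‖y‖ := by
  rw [blockSoftThreshold, softThreshold, norm_smul, Real.norm_of_nonneg (le_max_right _ _)]
  rcases (norm_nonneg y).eq_or_lt with hy | hy
  · rw [← hy]
    simp [hκ]
  · rw [max_mul_of_nonneg _ _ hy.le, sub_mul, div_mul_cancel₀ _ hy.ne', one_mul, zero_mul]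

theorem blockSoftThreshold_isMinOn {κ : ℝ} (hκ : 0 ≤ κ) (y : E) :
    IsMinOn (fun z => κ * ‖z‖ + (1 / 2) * ‖z - y‖ ^ 2) Set.univ (blockSoftThreshold κ y) := by
  intro z _
  have hnorm := norm_blockSoftThreshold hκ y
  calc κ * ‖blockSoftThreshold κ y‖ + (1 / 2) * ‖blockSoftThreshold κ y - y‖ ^ 2
      = κ * softThreshold κ ‖y‖ + (1 / 2) * (softThreshold κ ‖y‖ - ‖y‖) ^ 2 := by
        rw [blockSoftThreshold, norm_smul_sub_self (le_max_right _ _), sq_abs, ← blockSoftThreshold,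
          hnorm]
    _ ≤ κ * ‖z‖ + (1 / 2) * (‖z‖ - ‖y‖) ^ 2 :=
        softThreshold_isMinOn κ ‖y‖ (Set.mem_Ici.mpr (norm_nonneg z))
    _ ≤ κ * ‖z‖ + (1 / 2) * ‖z - y‖ ^ 2 := by
        have h := pow_le_pow_left₀ (abs_nonneg _) (abs_norm_sub_norm_le z y) 2
        rw [sq_abs] at h
        gcongr

end BlockSoftThreshold

open Classical in
theorem stmt_1_general (n : ℕ) (κ : ℝ) (hκ : 0 < κ)
    (y zstar : EuclideanSpace ℂ (Fin n))
    (hz : zstar = if y = 0 then 0 else (max (1 - κ / ‖y‖) 0 : ℝ) • y) :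
    ∀ z : EuclideanSpace ℂ (Fin n),
      κ * ‖zstar‖ + (1 / 2) * ‖zstar - y‖ ^ 2 ≤ κ * ‖z‖ + (1 / 2) * ‖z - y‖ ^ 2 := by
  have hzstar : zstar = blockSoftThreshold κ y := by
    rw [hz, blockSoftThreshold]
    split_ifs with hy
    · rw [hy, smul_zero]
    · rfl
  intro z
  rw [hzstar]
  exact blockSoftThreshold_isMinOn hκ.le y (Set.mem_univ z)

open Classical in
/-- block soft-thresholding solves the ADMM Z-update (Prop. 1),
for a single entry group. -/
theorem stmt_1 (n : ℕ) (hn : 1 ≤ n) (κ : ℝ) (hκ : 0 < κ)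
    (y zstar : EuclideanSpace ℂ (Fin n))
    (hz : zstar = if y = 0 then 0 else (max (1 - κ / ‖y‖) 0 : ℝ) • y) :
    ∀ z : EuclideanSpace ℂ (Fin n),
      κ * ‖zstar‖ + (1 / 2) * ‖zstar - y‖ ^ 2 ≤ κ * ‖z‖ + (1 / 2) * ‖z - y‖ ^ 2 :=
  stmt_1_general n κ hκ y zstar hz
end

section
/- Fix integers p ≥ 1, F ≥ 1, reals U ≥ 1, λ > 0, φ > 0 and an integer s ≥ 1. Let S[1],…,S[F] be p×p Hermitian matrices with I ⪯ S[f] ⪯ U·I for all f, and set K[f] := S[f]⁻¹. Let 𝒮 := gsupp(K[·]) and assume |𝒮| ≤ s. Assume the compatibility condition: for every sequence X[·] of p×p Hermitian matrices with ‖X_{𝒮^c}‖₁ ≤ 3‖X_𝒮‖₁ one has (1/F) ∑_{f=1}^F ‖S[f]^{1/2} X[f] S[f]^{1/2}‖_F² ≥ (φ/s)‖X_𝒮‖₁². Let Ŝ[1],…,Ŝ[F] be p×p Hermitian matrices with max_{f} max_{i,j} |S[f]_{i,j} - Ŝ[f]_{i,j}| ≤ λ/2. If K̂[·] ∈ 𝒞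 minimizes the gLASSO objective J(X) := -A{X} + ⟨Ŝ[·],X[·]⟩ + λ‖X‖₁ over 𝒞, then ‖K̂ - K‖₁ ≤ 96 (2U+1)² (s/φ) λ. (This is the key deterministic error bound, inequality (22) of the paper.) -/
open Matrix
open scoped ComplexOrder

/-- The positive semidefinite square root of a PSD matrix (the old Mathlib `Matrix.PosSemidef.sqrt`). -/
noncomputable def psdSqrt {p : ℕ} {A : Matrix (Fin p) (Fin p) ℂ} (hA : A.PosSemidef) :
    Matrix (Fin p) (Fin p) ℂ :=
  hA.1.eigenvectorUnitary.1 * diagonal ((↑) ∘ (Real.sqrt ·) ∘ hA.1.eigenvalues) *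
    (star hA.1.eigenvectorUnitary : Matrix (Fin p) (Fin p) ℂ)

/-!
Write `Δ = K̂ - K`. The scalar inequality `log x ≤ (x - 1) - (x - 1)² / (2U)` on `(0, U]`, applied
to the eigenvalues of `S^{1/2} K̂ S^{1/2}` (which lie in `(0, U]` because `K̂ ⪯ I` and `S ⪯ U I`),
gives the strong concavity bound `A{K̂} - A{K} ≤ ⟨S, Δ⟩ - Q / (2U)` with
`Q = (1/F) ∑ ‖S^{1/2} Δ S^{1/2}‖_F²`. Since `K ∈ 𝒞`, optimality gives `J(K̂) ≤ J(K)`; the noise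
term `⟨S - Ŝ, Δ⟩` is at most `λ/2 ‖Δ‖₁`, and as `K` vanishes off `𝒮` the penalty satisfies
`‖K̂‖₁ - ‖K‖₁ ≥ ‖Δ_{𝒮ᶜ}‖₁ - ‖Δ_𝒮‖₁`. Together:
`Q/(2U) + λ/2 ‖Δ_{𝒮ᶜ}‖₁ ≤ 3λ/2 ‖Δ_𝒮‖₁`. Thus `Δ` lies in the cone of the compatibility
condition, so `(φ/s) ‖Δ_𝒮‖₁² ≤ Q ≤ 3Uλ ‖Δ_𝒮‖₁`, and `‖Δ‖₁ ≤ 4 ‖Δ_𝒮‖₁ ≤ 12 U λ s / φ`.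
-/

open scoped MatrixOrder

namespace Real

lemma log_le_sub_inv_div_two {x : ℝ} (hx : 1 ≤ x) : log x ≤ (x - x⁻¹) / 2 := by
  rw [← sinh_log (by linarith)]
  exact self_le_sinh_iff.2 (log_nonneg hx)

lemma log_le_sub_one_sub_sq_div_two {x : ℝ} (hx : 0 < x) (hx1 : x ≤ 1) :
    log x ≤ (x - 1) - (x - 1) ^ 2 / 2 := by
  rcases hx1.eq_or_lt with rfl | hx1
  · simp
  -- `-log x = ∑ (1 - x)^(n+1) / (n+1)` dominates its first two terms.
  have hsum := hasSum_pow_div_log_of_abs_lt_one (x := 1 - x)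
    (by rw [abs_lt]; constructor <;> linarith)
  have h2 := sum_le_hasSum (Finset.range 2) (fun n _ => by positivity) hsum
  simp only [Finset.sum_range_succ, Finset.sum_range_zero, sub_sub_cancel] at h2
  norm_num at h2
  nlinarith

lemma log_le_sub_one_sub_sq_div {U x : ℝ} (hU : 1 ≤ U) (hx : 0 < x) (hxU : x ≤ U) :
    log x ≤ (x - 1) - (x - 1) ^ 2 / (2 * U) := by
  rcases le_total x 1 with hx1 | hx1
  · calc log x ≤ (x - 1) - (x - 1) ^ 2 / 2 := log_le_sub_one_sub_sq_div_two hx hx1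
      _ ≤ (x - 1) - (x - 1) ^ 2 / (2 * U) := by
        gcongr (x - 1) - ?_
        exact div_le_div_of_nonneg_left (sq_nonneg _) two_pos (by linarith)
  · calc log x ≤ (x - x⁻¹) / 2 := log_le_sub_inv_div_two hx1
      _ = (x - 1) - (x - 1) ^ 2 / (2 * x) := by field_simp; ring
      _ ≤ (x - 1) - (x - 1) ^ 2 / (2 * U) := by gcongr

end Real

lemma Complex.log_re_mul_of_pos {z w : ℂ} (hz : 0 < z) (hw : 0 < w) :
    Real.log (z * w).re = Real.log z.re + Real.log w.re := by
  obtain ⟨hz, hz'⟩ := Complex.pos_iff.1 hz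
  obtain ⟨hw, hw'⟩ := Complex.pos_iff.1 hw
  rw [Complex.mul_re, ← hz', zero_mul, sub_zero, Real.log_mul hz.ne' hw.ne']

lemma Matrix.IsHermitian.trace_cfc {n 𝕜 : Type*} [Fintype n] [DecidableEq n] [RCLike 𝕜]
    {A : Matrix n n 𝕜} (hA : A.IsHermitian) (f : ℝ → ℝ) :
    (cfc f A).trace = ∑ i, (f (hA.eigenvalues i) : 𝕜) := by
  rw [hA.cfc_eq, Matrix.IsHermitian.cfc, Unitary.conjStarAlgAut_apply, Matrix.trace_mul_cycle,
    Unitary.coe_star_mul_self, one_mul, Matrix.trace_diagonal]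
  rfl

lemma Matrix.IsHermitian.eigenvalues_le {n 𝕜 : Type*} [Fintype n] [DecidableEq n] [RCLike 𝕜]
    {A : Matrix n n 𝕜} (hA : A.IsHermitian) {U : ℝ} (h : A ≤ algebraMap ℝ _ U) (i : n) :
    hA.eigenvalues i ≤ U :=
  (le_algebraMap_iff_spectrum_le hA.isSelfAdjoint).1 h _ (hA.eigenvalues_mem_spectrum_real i)

open scoped Matrix.Norms.L2Operator in
lemma Matrix.inv_le_one_of_one_le {n : Type*} [Fintype n] [DecidableEq n]
    {S : Matrix n n ℂ} (h : 1 ≤ S) : S⁻¹ ≤ 1 := by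
  lift S to (Matrix n n ℂ)ˣ using CStarAlgebra.isUnit_of_le _ h
  simpa using (CStarAlgebra.inv_le_one_iff_one_le (zero_le_one.trans h)).2 h

lemma psdSqrt_eq_sqrt {p : ℕ} {A : Matrix (Fin p) (Fin p) ℂ} (hA : A.PosSemidef) :
    psdSqrt hA = CFC.sqrt A := by
  rw [CFC.sqrt_eq_cfc, cfc_nnreal_eq_real _ A, hA.1.cfc_eq, Matrix.IsHermitian.cfc, psdSqrt,
    Unitary.conjStarAlgAut_apply]
  congr 3
  funext i
  simp [max_eq_left (hA.eigenvalues_nonneg i)]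

lemma frobSq_nonneg {p : ℕ} (M : Matrix (Fin p) (Fin p) ℂ) : 0 ≤ frobSq M := by
  unfold frobSq
  positivity

lemma frobSq_eq_re_trace_mul_self {p : ℕ} {A : Matrix (Fin p) (Fin p) ℂ} (hA : A.IsHermitian) :
    frobSq A = (A * A).trace.re := by
  simp only [frobSq, Matrix.trace, Matrix.diag, Matrix.mul_apply, Complex.re_sum]
  rw [Finset.sum_comm]
  refine Finset.sum_congr rfl fun j _ => Finset.sum_congr rfl fun i _ => ?_
  rw [← hA.apply j i, ← Complex.normSq_eq_norm_sq, Complex.normSq_apply]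
  simp

lemma Matrix.PosDef.log_re_det_le {p : ℕ} {U : ℝ} {P : Matrix (Fin p) (Fin p) ℂ}
    (hP : P.PosDef) (hU : 1 ≤ U) (hPU : P ≤ algebraMap ℝ _ U) :
    Real.log P.det.re ≤ (P - 1).trace.re - frobSq (P - 1) / (2 * U) := by
  set μ := hP.1.eigenvalues
  have hsub : cfc (fun x : ℝ => x - 1) P = P - 1 := by
    rw [cfc_sub (fun x : ℝ => x) (fun _ => (1 : ℝ)) P, cfc_id' ℝ P hP.1.isSelfAdjoint,
      cfc_const_one ℝ P]
  have hsq : cfc (fun x : ℝ => (x - 1) ^ 2) P = (P - 1) * (P - 1) := by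
    rw [cfc_pow (fun x : ℝ => x - 1) 2 P, hsub, sq]
  have hdet : Real.log P.det.re = ∑ i, Real.log (μ i) := by
    rw [hP.1.det_eq_prod_eigenvalues, ← RCLike.ofReal_prod,
      ← Real.log_prod fun i _ => (hP.eigenvalues_pos i).ne']
    rfl
  rw [hdet, frobSq_eq_re_trace_mul_self (hP.1.sub Matrix.isHermitian_one), ← hsq, ← hsub,
    hP.1.trace_cfc, hP.1.trace_cfc]
  simp only [Complex.re_sum, Finset.sum_div, ← Finset.sum_sub_distrib]
  exact Finset.sum_le_sum fun i _ =>
    Real.log_le_sub_one_sub_sq_div hU (hP.eigenvalues_pos i) (hP.1.eigenvalues_le hPU i)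

lemma log_re_det_sub_log_re_det_inv_le {p : ℕ} {U : ℝ} (hU : 1 ≤ U)
    {S B : Matrix (Fin p) (Fin p) ℂ}
    (hS : S.PosSemidef) (hS1 : 1 ≤ S) (hSU : S ≤ algebraMap ℝ _ U) (hB : B.PosDef) (hB1 : B ≤ 1) :
    Real.log B.det.re - Real.log S⁻¹.det.re ≤
      (S * (B - S⁻¹)).trace.re - frobSq (psdSqrt hS * (B - S⁻¹) * psdSqrt hS) / (2 * U) := by
  have hSpd : S.PosDef := by simpa using Matrix.PosDef.one.add_posSemidef (Matrix.le_iff.1 hS1)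
  rw [psdSqrt_eq_sqrt]
  set T := CFC.sqrt S
  have hT : 0 ≤ T := CFC.sqrt_nonneg S
  have hTT : T * T = S := CFC.sqrt_mul_sqrt_self S hS.nonneg
  have hTunit : IsUnit T := isUnit_of_mul_isUnit_left (hTT ▸ hSpd.isUnit)
  have hTdet := (Matrix.isUnit_iff_isUnit_det T).1 hTunit
  have hTST : T * S⁻¹ * T = 1 := by
    rw [← hTT, Matrix.mul_inv_rev, Matrix.mul_assoc, Matrix.mul_assoc,
      Matrix.nonsing_inv_mul _ hTdet, Matrix.mul_one, Matrix.mul_nonsing_inv _ hTdet]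
  have hP : (T * B * T).PosDef := by
    have := hB.conjTranspose_mul_mul_same (Matrix.mulVec_injective_iff_isUnit.2 hTunit)
    rwa [show Tᴴ = T from hT.isSelfAdjoint] at this
  have hPU : T * B * T ≤ algebraMap ℝ _ U := by
    calc T * B * T ≤ T * 1 * T := conjugate_le_conjugate_of_nonneg hB1 hT
      _ = S := by rw [Matrix.mul_one, hTT]
      _ ≤ algebraMap ℝ _ U := hSU
  have hdetP : Real.log (T * B * T).det.re = Real.log S.det.re + Real.log B.det.re := by
    rw [Matrix.det_mul, Matrix.det_mul, mul_comm _ T.det, ← mul_assoc, ← Matrix.det_mul, hTT,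
      Complex.log_re_mul_of_pos hSpd.det_pos hB.det_pos]
  have hdetS : Real.log S.det.re + Real.log S⁻¹.det.re = 0 := by
    rw [← Complex.log_re_mul_of_pos hSpd.det_pos hSpd.inv.det_pos, ← Matrix.det_mul,
      Matrix.mul_nonsing_inv _ ((Matrix.isUnit_iff_isUnit_det S).1 hSpd.isUnit)]
    simp
  have htrace : (T * B * T - 1).trace = (S * (B - S⁻¹)).trace := by
    rw [Matrix.trace_sub, Matrix.mul_sub, Matrix.trace_sub,
      Matrix.mul_nonsing_inv _ ((Matrix.isUnit_iff_isUnit_det S).1 hSpd.isUnit),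
      Matrix.trace_mul_cycle, hTT]
  have hconj : T * (B - S⁻¹) * T = T * B * T - 1 := by
    rw [Matrix.mul_sub, Matrix.sub_mul, hTST]
  rw [hconj, ← htrace]
  linarith [hP.log_re_det_le hU hPU]

section SequenceNorms

variable {p F : ℕ}

lemma l1Norm_nonneg (X : Fin F → Matrix (Fin p) (Fin p) ℂ) : 0 ≤ l1Norm X :=
  Finset.sum_nonneg fun _ _ => Finset.sum_nonneg fun _ _ => Real.sqrt_nonneg _

lemma entryNorm_eq_norm_div_sqrt (X : Fin F → Matrix (Fin p) (Fin p) ℂ) (i j : Fin p) :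
    entryNorm X i j =
      ‖(WithLp.toLp 2 fun f => X f i j : EuclideanSpace ℂ (Fin F))‖ / Real.sqrt F := by
  rw [entryNorm, EuclideanSpace.norm_eq, one_div_mul_eq_div, Real.sqrt_div' _ (Nat.cast_nonneg F)]

lemma abs_entryNorm_sub_entryNorm_le (X Y : Fin F → Matrix (Fin p) (Fin p) ℂ) (i j : Fin p) :
    |entryNorm X i j - entryNorm Y i j| ≤ entryNorm (fun f => X f - Y f) i j := by
  simp only [entryNorm_eq_norm_div_sqrt, ← sub_div, abs_div, Real.sqrt_nonneg, abs_of_nonneg]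
  gcongr
  exact abs_norm_sub_norm_le _ _

open Classical in
lemma entryNorm_restrictSeq (𝒮 : Set (Fin p × Fin p)) (X : Fin F → Matrix (Fin p) (Fin p) ℂ)
    (i j : Fin p) :
    entryNorm (restrictSeq 𝒮 X) i j = if (i, j) ∈ 𝒮 then entryNorm X i j else 0 := by
  by_cases h : (i, j) ∈ 𝒮 <;> simp [entryNorm, restrictSeq, h]

lemma l1Norm_eq_restrictSeq_add_restrictSeq_compl (𝒮 : Set (Fin p × Fin p))
    (X : Fin F → Matrix (Fin p) (Fin p) ℂ) :
    l1Norm X = l1Norm (restrictSeq 𝒮 X) + l1Norm (restrictSeq 𝒮ᶜ X) := by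
  simp only [l1Norm, ← Finset.sum_add_distrib, entryNorm_restrictSeq]
  refine Finset.sum_congr rfl fun i _ => Finset.sum_congr rfl fun j _ => ?_
  by_cases h : (i, j) ∈ 𝒮 <;> simp [h]

lemma l1Norm_restrictSeq_compl_sub_le {𝒮 : Set (Fin p × Fin p)}
    (X Y : Fin F → Matrix (Fin p) (Fin p) ℂ) (hY : gsupp Y ⊆ 𝒮) :
    l1Norm (restrictSeq 𝒮ᶜ fun f => X f - Y f) - l1Norm (restrictSeq 𝒮 fun f => X f - Y f) ≤
      l1Norm X - l1Norm Y := by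
  simp only [l1Norm, ← Finset.sum_sub_distrib, entryNorm_restrictSeq]
  refine Finset.sum_le_sum fun i _ => Finset.sum_le_sum fun j _ => ?_
  by_cases h : (i, j) ∈ 𝒮
  · have := abs_entryNorm_sub_entryNorm_le X Y i j
    simp only [Set.mem_compl_iff, h, not_true_eq_false, if_true, if_false]
    linarith [neg_abs_le (entryNorm X i j - entryNorm Y i j)]
  · have hY0 : ∀ f, Y f i j = 0 := fun f => by
      by_contra hne
      exact h (hY ⟨f, hne⟩)
    simp only [Set.mem_compl_iff, h, not_false_eq_true, if_true, if_false]
    simp [entryNorm, hY0]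

lemma mean_norm_le_entryNorm (X : Fin F → Matrix (Fin p) (Fin p) ℂ) (i j : Fin p) :
    (1 / (F : ℝ)) * ∑ f, ‖X f i j‖ ≤ entryNorm X i j := by
  have := sum_div_card_sq_le_sum_sq_div_card (s := Finset.univ) (f := fun f => ‖X f i j‖)
  rw [Finset.card_univ, Fintype.card_fin] at this
  rw [entryNorm, one_div_mul_eq_div, one_div_mul_eq_div]
  exact Real.le_sqrt_of_sq_le this

lemma re_trace_mul_le {M N : Matrix (Fin p) (Fin p) ℂ} {c : ℝ} (hM : ∀ i j, ‖M i j‖ ≤ c) :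
    (M * N).trace.re ≤ c * ∑ i, ∑ j, ‖N i j‖ :=
  calc (M * N).trace.re ≤ ‖(M * N).trace‖ := Complex.re_le_norm _
    _ ≤ ∑ i, ∑ k, ‖M i k‖ * ‖N k i‖ := by
      simp only [Matrix.trace, Matrix.diag, Matrix.mul_apply, ← norm_mul]
      exact (norm_sum_le _ _).trans (Finset.sum_le_sum fun i _ => norm_sum_le _ _)
    _ ≤ ∑ i, ∑ k, c * ‖N k i‖ := by gcongr with i _ k _; exact hM i k
    _ = c * ∑ i, ∑ j, ‖N i j‖ := by rw [Finset.sum_comm]; simp [Finset.mul_sum]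

lemma seqInner_le_mul_l1Norm {E X : Fin F → Matrix (Fin p) (Fin p) ℂ} {c : ℝ} (hc : 0 ≤ c)
    (hE : ∀ f i j, ‖E f i j‖ ≤ c) : seqInner E X ≤ c * l1Norm X :=
  calc seqInner E X ≤ (1 / (F : ℝ)) * ∑ f, c * ∑ i, ∑ j, ‖X f i j‖ := by
        unfold seqInner
        gcongr with f
        exact re_trace_mul_le (hE f)
    _ = c * ∑ i, ∑ j, (1 / (F : ℝ)) * ∑ f, ‖X f i j‖ := by
        simp only [Finset.mul_sum]
        rw [Finset.sum_comm]
        refine Finset.sum_congr rfl fun i _ => ?_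
        rw [Finset.sum_comm]
        exact Finset.sum_congr rfl fun j _ => Finset.sum_congr rfl fun f _ => by ring
    _ ≤ c * l1Norm X := by
        unfold l1Norm
        gcongr with i _ j _
        exact mean_norm_le_entryNorm X i j

lemma seqInner_sub_left (A B X : Fin F → Matrix (Fin p) (Fin p) ℂ) :
    seqInner A X - seqInner B X = seqInner (fun f => A f - B f) X := by
  simp only [seqInner, ← mul_sub, ← Finset.sum_sub_distrib, Matrix.sub_mul, Matrix.trace_sub,
    Complex.sub_re]

lemma seqInner_sub_right (A X Y : Fin F → Matrix (Fin p) (Fin p) ℂ) :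
    seqInner A X - seqInner A Y = seqInner A (fun f => X f - Y f) := by
  simp only [seqInner, ← mul_sub, ← Finset.sum_sub_distrib, ← Complex.sub_re, ← Matrix.trace_sub]

lemma memC_inv {S : Fin F → Matrix (Fin p) (Fin p) ℂ} (hS : ∀ f, 1 ≤ S f) :
    memC fun f => (S f)⁻¹ := fun f =>
  have hSpd : (S f).PosDef := by
    simpa using Matrix.PosDef.one.add_posSemidef (Matrix.le_iff.1 (hS f))
  ⟨hSpd.inv.1, hSpd.inv, Matrix.le_iff.1 (Matrix.inv_le_one_of_one_le (hS f))⟩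

lemma Afun_sub_Afun_inv_le {U : ℝ} (hU : 1 ≤ U)
    {S B : Fin F → Matrix (Fin p) (Fin p) ℂ}
    (hS : ∀ f, (S f).PosSemidef) (hS1 : ∀ f, 1 ≤ S f) (hSU : ∀ f, S f ≤ algebraMap ℝ _ U)
    (hB : memC B) :
    Afun B - Afun (fun f => (S f)⁻¹) ≤ seqInner S (fun f => B f - (S f)⁻¹) -
      (1 / (F : ℝ)) * (∑ f, frobSq (psdSqrt (hS f) * (B f - (S f)⁻¹) * psdSqrt (hS f))) /
        (2 * U) := by
  rw [Afun, Afun, seqInner, ← mul_sub, ← Finset.sum_sub_distrib, mul_div_assoc, ← mul_sub,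
    Finset.sum_div, ← Finset.sum_sub_distrib]
  refine mul_le_mul_of_nonneg_left (Finset.sum_le_sum fun f _ => ?_) (by positivity)
  exact log_re_det_sub_log_re_det_inv_le hU (hS f) (hS1 f) (hSU f) (hB f).2.1
    (Matrix.le_iff.2 (hB f).2.2)

end SequenceNorms

lemma add_le_of_basic_inequality {U lam κ Q a b : ℝ} (hU : 0 < U) (hlam : 0 < lam) (hκ : 0 < κ)
    (hQ : 0 ≤ Q) (ha : 0 ≤ a) (hb : 0 ≤ b) (hbasic : Q / (2 * U) + lam / 2 * b ≤ 3 * lam / 2 * a)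
    (hcompat : b ≤ 3 * a → κ * a ^ 2 ≤ Q) :
    a + b ≤ 12 * U * lam / κ := by
  have hQU : 0 ≤ Q / (2 * U) := by positivity
  have hcone : b ≤ 3 * a := by nlinarith
  have hQa : Q ≤ 3 * U * lam * a := by
    have : Q / (2 * U) ≤ 3 * lam / 2 * a := by nlinarith
    rwa [div_le_iff₀ (by positivity), show 3 * lam / 2 * a * (2 * U) = 3 * U * lam * a by ring]
      at this
  have hκa : κ * a ≤ 3 * U * lam := by
    rcases ha.eq_or_lt with rfl | ha
    · rw [mul_zero]; positivity
    · nlinarith [hcompat hcone]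
  rw [le_div_iff₀ hκ]
  nlinarith

theorem stmt_2_general (p F s : ℕ) (hs : 1 ≤ s)
    (U lam φ : ℝ) (hU : 1 ≤ U) (hlam : 0 < lam) (hφ : 0 < φ)
    (S : Fin F → Matrix (Fin p) (Fin p) ℂ)
    (hSpsd : ∀ f, (S f).PosSemidef)
    (hSlow : ∀ f, (S f - 1).PosSemidef)
    (hSup : ∀ f, ((U : ℂ) • (1 : Matrix (Fin p) (Fin p) ℂ) - S f).PosSemidef)
    (K : Fin F → Matrix (Fin p) (Fin p) ℂ) (hK : ∀ f, K f = (S f)⁻¹)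
    (𝒮 : Set (Fin p × Fin p)) (h𝒮 : 𝒮 = gsupp K)
    (hcompat : ∀ X : Fin F → Matrix (Fin p) (Fin p) ℂ, (∀ f, (X f).IsHermitian) →
      l1Norm (restrictSeq 𝒮ᶜ X) ≤ 3 * l1Norm (restrictSeq 𝒮 X) →
      (φ / (s : ℝ)) * (l1Norm (restrictSeq 𝒮 X)) ^ 2 ≤
        (1 / (F : ℝ)) * ∑ f, frobSq (psdSqrt (hSpsd f) * X f * psdSqrt (hSpsd f)))
    (Shat : Fin F → Matrix (Fin p) (Fin p) ℂ)
    (herr : ∀ f i j, ‖S f i j - Shat f i j‖ ≤ lam / 2)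
    (Khat : Fin F → Matrix (Fin p) (Fin p) ℂ) (hKhatC : memC Khat)
    (hmin : ∀ X, memC X → glassoObj Shat lam Khat ≤ glassoObj Shat lam X) :
    l1Norm (fun f => Khat f - K f) ≤ 96 * (2 * U + 1) ^ 2 * ((s : ℝ) / φ) * lam := by
  obtain rfl : K = fun f => (S f)⁻¹ := funext hK
  have hS1 : ∀ f, 1 ≤ S f := fun f => Matrix.le_iff.2 (hSlow f)
  have hSU : ∀ f, S f ≤ algebraMap ℝ _ U := fun f =>
    Matrix.le_iff.2 (by simpa [Algebra.algebraMap_eq_smul_one] using hSup f)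
  have hKC := memC_inv hS1
  have hopt := hmin _ hKC
  rw [glassoObj, glassoObj] at hopt
  have hlogdet := Afun_sub_Afun_inv_le hU hSpsd hS1 hSU hKhatC
  have hnoise := seqInner_le_mul_l1Norm (E := fun f => S f - Shat f)
    (X := fun f => Khat f - (S f)⁻¹) (by linarith) herr
  have hpenalty := l1Norm_restrictSeq_compl_sub_le Khat _ h𝒮.ge
  rw [l1Norm_eq_restrictSeq_add_restrictSeq_compl 𝒮] at hnoise ⊢
  have hs0 : (0 : ℝ) < s := by exact_mod_cast hs
  calc _ ≤ 12 * U * lam / (φ / s) :=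
        add_le_of_basic_inequality (by linarith) hlam (by positivity)
          (mul_nonneg (by positivity) (Finset.sum_nonneg fun f _ => frobSq_nonneg _))
          (l1Norm_nonneg _) (l1Norm_nonneg _)
          (by linarith [seqInner_sub_left S Shat fun f => Khat f - (S f)⁻¹,
            seqInner_sub_right Shat Khat fun f => (S f)⁻¹,
            mul_le_mul_of_nonneg_left hpenalty hlam.le])
          (hcompat _ fun f => (hKhatC f).1.sub (hKC f).1)
    _ = 12 * U * ((s : ℝ) / φ) * lam := by field_simp
    _ ≤ 96 * (2 * U + 1) ^ 2 * ((s : ℝ) / φ) * lam := by gcongr <;> nlinarith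

/-- the key deterministic error bound, inequality (22). -/
theorem stmt_2 (p F s : ℕ) (hp : 1 ≤ p) (hF : 1 ≤ F) (hs : 1 ≤ s)
    (U lam φ : ℝ) (hU : 1 ≤ U) (hlam : 0 < lam) (hφ : 0 < φ)
    (S : Fin F → Matrix (Fin p) (Fin p) ℂ)
    (hSherm : ∀ f, (S f).IsHermitian)
    (hSpsd : ∀ f, (S f).PosSemidef)
    (hSlow : ∀ f, (S f - 1).PosSemidef)
    (hSup : ∀ f, ((U : ℂ) • (1 : Matrix (Fin p) (Fin p) ℂ) - S f).PosSemidef)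
    (K : Fin F → Matrix (Fin p) (Fin p) ℂ) (hK : ∀ f, K f = (S f)⁻¹)
    (𝒮 : Set (Fin p × Fin p)) (h𝒮 : 𝒮 = gsupp K) (hcard : 𝒮.ncard ≤ s)
    (hcompat : ∀ X : Fin F → Matrix (Fin p) (Fin p) ℂ, (∀ f, (X f).IsHermitian) →
      l1Norm (restrictSeq 𝒮ᶜ X) ≤ 3 * l1Norm (restrictSeq 𝒮 X) →
      (φ / (s : ℝ)) * (l1Norm (restrictSeq 𝒮 X)) ^ 2 ≤
        (1 / (F : ℝ)) * ∑ f, frobSq (psdSqrt (hSpsd f) * X f * psdSqrt (hSpsd f)))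
    (Shat : Fin F → Matrix (Fin p) (Fin p) ℂ) (hShat : ∀ f, (Shat f).IsHermitian)
    (herr : ∀ f i j, ‖S f i j - Shat f i j‖ ≤ lam / 2)
    (Khat : Fin F → Matrix (Fin p) (Fin p) ℂ) (hKhatC : memC Khat)
    (hmin : ∀ X, memC X → glassoObj Shat lam Khat ≤ glassoObj Shat lam X) :
    l1Norm (fun f => Khat f - K f) ≤ 96 * (2 * U + 1) ^ 2 * ((s : ℝ) / φ) * lam :=
  stmt_2_general p F s hs U lam φ hU hlam hφ S hSpsd hSlow hSup K hK 𝒮 h𝒮 hcompat Shat herr Khat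
    hKhatC hmin
end

section
/- Let d ∈ ℝ and ρ > 0. Define x* := min{ ( -d + √(d² + 4ρ) ) / (2ρ), 1 }. Then x* ∈ (0,1] and for every x ∈ (0,1]: -log x* + d·x* + (ρ/2)(x*)² ≤ -log x + d·x + (ρ/2)x². (Scalar optimality claim underlying the ADMM X-update in the proof of Proposition 1.) -/
/-!
The objective f(x) = -log x + d x + (ρ/2) x² is convex and lies above its tangent line
f(a) + (d + ρa - 1/a)(x - a) at every a > 0. The slope vanishes at the positive root r of
ρx² + dx - 1, so x* = r is optimal when r ≤ 1. When r ≥ 1 the point 1 lies between 0 and r,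
where that quadratic is nonpositive, so the slope at x* = 1 is ≤ 0 and every x ≤ 1 lies on the
side where the tangent line only increases.
-/

open Matrix
open scoped ComplexOrder

lemma neg_log_add_quadratic_tangent_le {d ρ a x : ℝ} (hρ : 0 ≤ ρ) (ha : 0 < a) (hx : 0 < x) :
    -Real.log a + d * a + ρ / 2 * a ^ 2 + (d + ρ * a - a⁻¹) * (x - a) ≤
      -Real.log x + d * x + ρ / 2 * x ^ 2 := by
  have hlog : Real.log x - Real.log a ≤ x / a - 1 := by
    rw [← Real.log_div hx.ne' ha.ne']
    exact Real.log_le_sub_one_of_pos (div_pos hx ha)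
  have hdiv : x / a - 1 = a⁻¹ * (x - a) := by field_simp
  nlinarith [mul_nonneg hρ (sq_nonneg (x - a))]

section PositiveRoot

variable {d ρ : ℝ}

lemma lt_sqrt_sq_add (hρ : 0 < ρ) : d < √(d ^ 2 + 4 * ρ) :=
  (le_abs_self d).trans_lt <| by
    rw [← Real.sqrt_sq_eq_abs]
    exact Real.sqrt_lt_sqrt (sq_nonneg d) (by linarith)

lemma quadratic_posRoot_pos (hρ : 0 < ρ) : 0 < (-d + √(d ^ 2 + 4 * ρ)) / (2 * ρ) :=
  div_pos (by linarith [lt_sqrt_sq_add (d := d) hρ]) (by positivity)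

lemma quadratic_posRoot_eq (hρ : 0 < ρ) :
    ρ * ((-d + √(d ^ 2 + 4 * ρ)) / (2 * ρ)) ^ 2 + d * ((-d + √(d ^ 2 + 4 * ρ)) / (2 * ρ)) = 1 := by
  have hsq : √(d ^ 2 + 4 * ρ) ^ 2 = d ^ 2 + 4 * ρ := Real.sq_sqrt (by positivity)
  generalize √(d ^ 2 + 4 * ρ) = s at hsq ⊢
  field_simp
  linear_combination hsq

end PositiveRoot

lemma tangent_slope_eq_zero_of_root {d ρ r : ℝ} (hr : 0 < r) (hroot : ρ * r ^ 2 + d * r = 1) :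
    d + ρ * r - r⁻¹ = 0 := by
  field_simp
  linear_combination hroot

lemma tangent_slope_one_nonpos {d ρ r : ℝ} (hρ : 0 ≤ ρ) (hr : 0 < r)
    (hroot : ρ * r ^ 2 + d * r = 1) (h1r : 1 ≤ r) : d + ρ * 1 - 1⁻¹ ≤ 0 := by
  have hfactor : d + ρ - 1 = (1 - r) * (ρ + r⁻¹) := by
    field_simp
    linear_combination hroot
  rw [mul_one, inv_one, hfactor]
  exact mul_nonpos_of_nonpos_of_nonneg (by linarith) (by positivity)

/-- scalar optimality claim underlying the ADMM X-update. -/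
theorem stmt_3 (d ρ : ℝ) (hρ : 0 < ρ)
    (xstar : ℝ) (hx : xstar = min ((-d + Real.sqrt (d ^ 2 + 4 * ρ)) / (2 * ρ)) 1) :
    (0 < xstar ∧ xstar ≤ 1) ∧
      ∀ x : ℝ, 0 < x → x ≤ 1 →
        -Real.log xstar + d * xstar + (ρ / 2) * xstar ^ 2 ≤
          -Real.log x + d * x + (ρ / 2) * x ^ 2 := by
  have hr := quadratic_posRoot_pos (d := d) hρ
  have hroot := quadratic_posRoot_eq (d := d) hρ
  have hpos : 0 < xstar := hx ▸ lt_min hr one_pos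
  refine ⟨⟨hpos, hx ▸ min_le_right _ _⟩, fun x hx0 hx1 => ?_⟩
  refine le_trans (le_add_of_nonneg_right ?_) (neg_log_add_quadratic_tangent_le hρ.le hpos hx0)
  rcases le_total ((-d + √(d ^ 2 + 4 * ρ)) / (2 * ρ)) 1 with hr1 | hr1
  · rw [hx, min_eq_left hr1, tangent_slope_eq_zero_of_root hr hroot, zero_mul]
  · rw [hx, min_eq_right hr1]
    exact mul_nonneg_of_nonpos_of_nonpos (tangent_slope_one_nonpos hρ.le hr hroot hr1)
      (by linarith)
end

section
/- Let p ≥ 1, U ≥ 1, let S be a p×p Hermitian matrix with I ⪯ S ⪯ U·I, and let X be a p×p Hermitian matrix with 0 ≺ X ⪯ I. Then every eigenvalue γ of the Hermitian matrix Γ := S^{1/2}(X - S⁻¹)S^{1/2} satisfies -1 < γ ≤ 2U. (Eigenvalue localization used in the performance analysis of the gLASSO.) -/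
open Matrix
open scoped ComplexOrder

/-- The square root of a positive semidefinite matrix, as defined in Mathlib (Dec 2024). -/
noncomputable def Matrix.PosSemidef.sqrt {n : Type*} [Fintype n] [DecidableEq n] {𝕜 : Type*}
    [RCLike 𝕜] {A : Matrix n n 𝕜} (hA : A.PosSemidef) : Matrix n n 𝕜 :=
  (hA.1.eigenvectorUnitary : Matrix n n 𝕜) *
    diagonal ((RCLike.ofReal : ℝ → 𝕜) ∘ (√·) ∘ hA.1.eigenvalues) *
    (star hA.1.eigenvectorUnitary : Matrix n n 𝕜)

/-
With `Q = S^{1/2}` we have `Q S⁻¹ Q = 1`, so `Γ = Q X Q - 1`. Since `Q` is invertible and `X ≻ 0`,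
`Q X Q ≻ 0`, hence `Γ + 1 ≻ 0`. On the other side `Q X Q ⪯ Q Q = S ⪯ U`, so `Γ ⪯ U - 1 ≤ 2U`.
Eigenvalues are read off from these Loewner bounds via the Rayleigh quotients of the eigenvectors.
-/

namespace Matrix

variable {n 𝕜 : Type*} [Fintype n] [DecidableEq n] [RCLike 𝕜]

lemma PosSemidef.sqrt_mul_self {A : Matrix n n 𝕜} (hA : A.PosSemidef) :
    hA.sqrt * hA.sqrt = A := by
  set V : Matrix n n 𝕜 := (hA.1.eigenvectorUnitary : Matrix n n 𝕜)
  set D : Matrix n n 𝕜 := diagonal ((RCLike.ofReal : ℝ → 𝕜) ∘ (√·) ∘ hA.1.eigenvalues) with hD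
  have hV : star V * V = 1 := Unitary.coe_star_mul_self _
  have hDD : D * D = diagonal (RCLike.ofReal ∘ hA.1.eigenvalues) := by
    rw [hD, diagonal_mul_diagonal]
    congr 1
    funext i
    simp only [Function.comp_apply]
    rw [← RCLike.ofReal_mul, Real.mul_self_sqrt (hA.eigenvalues_nonneg i)]
  conv_rhs => rw [hA.1.spectral_theorem, Unitary.conjStarAlgAut_apply]
  change V * D * star V * (V * D * star V) = _
  rw [show V * D * star V * (V * D * star V) = V * D * (star V * V) * D * star V by
    noncomm_ring, hV, Matrix.mul_one, Matrix.mul_assoc V D D, hDD]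

lemma PosSemidef.posSemidef_sqrt {A : Matrix n n 𝕜} (hA : A.PosSemidef) :
    hA.sqrt.PosSemidef :=
  (posSemidef_diagonal_iff.mpr fun _ => RCLike.ofReal_nonneg.mpr (Real.sqrt_nonneg _)
    ).mul_mul_conjTranspose_same (hA.1.eigenvectorUnitary : Matrix n n 𝕜)

lemma PosSemidef.isUnit_det_sqrt {A : Matrix n n 𝕜} (hA : A.PosSemidef) (hdet : IsUnit A.det) :
    IsUnit hA.sqrt.det :=
  (IsUnit.mul_iff.mp (det_mul hA.sqrt hA.sqrt ▸ hA.sqrt_mul_self ▸ hdet)).1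

lemma PosSemidef.sqrt_mul_inv_mul_sqrt {A : Matrix n n 𝕜} (hA : A.PosSemidef)
    (hdet : IsUnit A.det) : hA.sqrt * A⁻¹ * hA.sqrt = 1 := by
  have hQ := hA.isUnit_det_sqrt hdet
  have hQQ := hA.sqrt_mul_self
  set Q := hA.sqrt
  clear_value Q
  rw [← hQQ, mul_inv_rev, show Q * (Q⁻¹ * Q⁻¹) * Q = (Q * Q⁻¹) * (Q⁻¹ * Q) by noncomm_ring,
    mul_nonsing_inv _ hQ, nonsing_inv_mul _ hQ, Matrix.one_mul]

namespace IsHermitian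

variable {A : Matrix n n 𝕜} (hA : A.IsHermitian)

lemma re_dotProduct_sub_smul_one_mulVec_eigenvectorBasis (c : ℝ) (i : n) :
    RCLike.re (star ⇑(hA.eigenvectorBasis i) ⬝ᵥ ((A - (c : 𝕜) • 1) *ᵥ ⇑(hA.eigenvectorBasis i)))
      = hA.eigenvalues i - c := by
  have hunit : star ⇑(hA.eigenvectorBasis i) ⬝ᵥ ⇑(hA.eigenvectorBasis i) = 1 := by
    rw [dotProduct_comm, ← EuclideanSpace.inner_eq_star_dotProduct, inner_self_eq_norm_sq_to_K,
      hA.eigenvectorBasis.orthonormal.1 i]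
    simp
  rw [sub_mulVec, dotProduct_sub, map_sub, ← hA.eigenvalues_eq, smul_mulVec, one_mulVec,
    dotProduct_smul, hunit, smul_eq_mul, mul_one, RCLike.ofReal_re]

lemma lt_eigenvalues_of_posDef_sub_smul_one {c : ℝ} (h : (A - (c : 𝕜) • 1).PosDef) (i : n) :
    c < hA.eigenvalues i := by
  have hv : ⇑(hA.eigenvectorBasis i) ≠ 0 := by
    simpa using hA.eigenvectorBasis.orthonormal.ne_zero i
  have hpos := (RCLike.pos_iff.mp (h.dotProduct_mulVec_pos hv)).1
  rw [re_dotProduct_sub_smul_one_mulVec_eigenvectorBasis] at hpos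
  linarith

lemma eigenvalues_le_of_posSemidef_smul_one_sub {c : ℝ} (h : ((c : 𝕜) • 1 - A).PosSemidef)
    (i : n) : hA.eigenvalues i ≤ c := by
  have hnonneg := (RCLike.nonneg_iff.mp (h.dotProduct_mulVec_nonneg ⇑(hA.eigenvectorBasis i))).1
  rw [← neg_sub, neg_mulVec, dotProduct_neg, map_neg,
    re_dotProduct_sub_smul_one_mulVec_eigenvectorBasis] at hnonneg
  linarith

end IsHermitian

end Matrix

theorem stmt_9_general (p : ℕ) (U : ℝ) (hU : 1 ≤ U)
    (S X : Matrix (Fin p) (Fin p) ℂ)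
    (hSpsd : S.PosSemidef)
    (hSlow : (S - 1).PosSemidef)
    (hSup : ((U : ℂ) • (1 : Matrix (Fin p) (Fin p) ℂ) - S).PosSemidef)
    (hXpd : X.PosDef)
    (hXup : ((1 : Matrix (Fin p) (Fin p) ℂ) - X).PosSemidef)
    (Γ : Matrix (Fin p) (Fin p) ℂ)
    (hΓdef : Γ = hSpsd.sqrt * (X - S⁻¹) * hSpsd.sqrt)
    (hΓ : Γ.IsHermitian) :
    ∀ i, -1 < hΓ.eigenvalues i ∧ hΓ.eigenvalues i ≤ 2 * U := by
  set Q := hSpsd.sqrt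
  have hSpd : S.PosDef := by simpa using PosDef.posSemidef_add hSlow PosDef.one
  have hSdet : IsUnit S.det := isUnit_iff_ne_zero.mpr hSpd.det_pos.ne'
  have hQh : Qᴴ = Q := hSpsd.posSemidef_sqrt.isHermitian
  have hQinj : Function.Injective Q.mulVec :=
    mulVec_injective_iff_isUnit.mpr ((isUnit_iff_isUnit_det Q).mpr (hSpsd.isUnit_det_sqrt hSdet))
  have hΓeq : Γ = Q * X * Q - 1 := by
    rw [hΓdef, Matrix.mul_sub, Matrix.sub_mul, hSpsd.sqrt_mul_inv_mul_sqrt hSdet]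
  have hlow : (Γ - ((-1 : ℝ) : ℂ) • 1).PosDef := by
    have hQXQ : (Q * X * Q).PosDef := by
      simpa only [hQh] using hXpd.conjTranspose_mul_mul_same hQinj
    simpa [hΓeq] using hQXQ
  have hup : (((U - 1 : ℝ) : ℂ) • 1 - Γ).PosSemidef := by
    have hsplit : ((U - 1 : ℝ) : ℂ) • 1 - Γ = ((U : ℂ) • 1 - S) + Qᴴ * (1 - X) * Q := by
      rw [hΓeq, hQh, Matrix.mul_sub, Matrix.sub_mul, Matrix.mul_one, hSpsd.sqrt_mul_self]
      push_cast
      module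
    rw [hsplit]
    exact hSup.add (hXup.conjTranspose_mul_mul_same Q)
  intro i
  exact ⟨hΓ.lt_eigenvalues_of_posDef_sub_smul_one (c := -1) hlow i,
    by linarith [hΓ.eigenvalues_le_of_posSemidef_smul_one_sub (c := U - 1) hup i]⟩

/-- eigenvalue localization used in the performance analysis. -/
theorem stmt_9 (p : ℕ) (hp : 1 ≤ p) (U : ℝ) (hU : 1 ≤ U)
    (S X : Matrix (Fin p) (Fin p) ℂ)
    (hSherm : S.IsHermitian) (hSpsd : S.PosSemidef)
    (hSlow : (S - 1).PosSemidef)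
    (hSup : ((U : ℂ) • (1 : Matrix (Fin p) (Fin p) ℂ) - S).PosSemidef)
    (hXherm : X.IsHermitian) (hXpd : X.PosDef)
    (hXup : ((1 : Matrix (Fin p) (Fin p) ℂ) - X).PosSemidef)
    (Γ : Matrix (Fin p) (Fin p) ℂ)
    (hΓdef : Γ = hSpsd.sqrt * (X - S⁻¹) * hSpsd.sqrt)
    (hΓ : Γ.IsHermitian) :
    ∀ i, -1 < hΓ.eigenvalues i ∧ hΓ.eigenvalues i ≤ 2 * U :=
  stmt_9_general p U hU S X hSpsd hSlow hSup hXpd hXup Γ hΓdef hΓ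
end

section
/- Fix integers p ≥ 1 and F ≥ 1 and a real ρ_min > 0. Let K[·] and K̂[·] be sequences of p×p complex matrices and set Δ[·] := K̂[·] - K[·]. Define the edge set ℰ := {(i,j) ∈ [p]×[p] : i ≠ j and K[f]_{i,j} ≠ 0 for some f}, and assume that ‖K_{i,j}[·]‖ ≥ ρ_min for every (i,j) ∈ ℰ. If ‖Δ‖₁ < ρ_min/2, then the thresholded edge estimate Ê(ρ_min/2) := {(i,j) ∈ [p]×[p] : i ≠ j and ‖K̂_{i,j}[·]‖ ≥ ρ_min/2} equals ℰ. (Exact recovery of the conditional independence graph by thresholding, condition (12).) -/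
open Matrix
open scoped ComplexOrder

/-!
Each entry group norm `‖X_{i,j}[·]‖` is `F^{-1/2}` times a Euclidean norm on `ℂ^F`, so it obeys the
triangle inequality and is dominated by `‖X‖₁`; in particular `‖Δ_{i,j}[·]‖ < ρ_min/2` for every
`(i,j)`. Off `ℰ` the entries of `K̂` are those of `Δ`, so they fall below the threshold; on `ℰ`,
`ρ_min ≤ ‖K_{i,j}[·]‖ ≤ ‖K̂_{i,j}[·]‖ + ‖Δ_{i,j}[·]‖` keeps them above it.
-/

section EntryNorm

variable {p F : ℕ}

lemma entryNorm_eq_mul_norm (X : Fin F → Matrix (Fin p) (Fin p) ℂ) (i j : Fin p) :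
    entryNorm X i j = Real.sqrt (1 / (F : ℝ)) * ‖WithLp.toLp 2 (fun f => X f i j)‖ := by
  rw [EuclideanSpace.norm_eq, entryNorm, Real.sqrt_mul (by positivity)]

lemma entryNorm_nonneg (X : Fin F → Matrix (Fin p) (Fin p) ℂ) (i j : Fin p) :
    0 ≤ entryNorm X i j :=
  Real.sqrt_nonneg _

lemma entryNorm_le_l1Norm (X : Fin F → Matrix (Fin p) (Fin p) ℂ) (i j : Fin p) :
    entryNorm X i j ≤ l1Norm X :=
  calc entryNorm X i j ≤ ∑ j', entryNorm X i j' :=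
        Finset.single_le_sum (f := entryNorm X i) (fun _ _ => entryNorm_nonneg X i _)
          (Finset.mem_univ j)
    _ ≤ ∑ i', ∑ j', entryNorm X i' j' :=
        Finset.single_le_sum (f := fun i' => ∑ j', entryNorm X i' j')
          (fun i' _ => Finset.sum_nonneg fun _ _ => entryNorm_nonneg X i' _) (Finset.mem_univ i)

lemma entryNorm_le_entryNorm_add_entryNorm_sub (X Y : Fin F → Matrix (Fin p) (Fin p) ℂ)
    (i j : Fin p) :
    entryNorm Y i j ≤ entryNorm X i j + entryNorm (fun f => X f - Y f) i j := by
  simp only [entryNorm_eq_mul_norm, ← mul_add]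
  gcongr
  exact norm_le_norm_add_norm_sub _ _

lemma entryNorm_sub_of_entry_eq_zero (X Y : Fin F → Matrix (Fin p) (Fin p) ℂ) {i j : Fin p}
    (hY : ∀ f, Y f i j = 0) :
    entryNorm (fun f => X f - Y f) i j = entryNorm X i j := by
  simp [entryNorm, hY]

end EntryNorm

theorem stmt_13_general (p F : ℕ) (ρmin : ℝ)
    (K Khat : Fin F → Matrix (Fin p) (Fin p) ℂ)
    (E : Set (Fin p × Fin p))
    (hE : E = {ij | ij.1 ≠ ij.2 ∧ ∃ f, K f ij.1 ij.2 ≠ 0})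
    (hmin : ∀ ij ∈ E, ρmin ≤ entryNorm K ij.1 ij.2)
    (hΔ : l1Norm (fun f => Khat f - K f) < ρmin / 2) :
    {ij : Fin p × Fin p | ij.1 ≠ ij.2 ∧ ρmin / 2 ≤ entryNorm Khat ij.1 ij.2} = E := by
  ext ⟨i, j⟩
  have hΔij : entryNorm (fun f => Khat f - K f) i j < ρmin / 2 :=
    (entryNorm_le_l1Norm _ i j).trans_lt hΔ
  subst hE
  refine and_congr_right fun hij => ⟨fun hKhat => ?_, fun hK => ?_⟩
  · by_contra! hK
    rw [entryNorm_sub_of_entry_eq_zero Khat K hK] at hΔij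
    linarith
  · have := entryNorm_le_entryNorm_add_entryNorm_sub Khat K i j
    linarith [hmin (i, j) ⟨hij, hK⟩]

/-- exact recovery of the conditional independence graph by
thresholding, condition (12). -/
theorem stmt_13 (p F : ℕ) (hp : 1 ≤ p) (hF : 1 ≤ F) (ρmin : ℝ) (hρ : 0 < ρmin)
    (K Khat : Fin F → Matrix (Fin p) (Fin p) ℂ)
    (E : Set (Fin p × Fin p))
    (hE : E = {ij | ij.1 ≠ ij.2 ∧ ∃ f, K f ij.1 ij.2 ≠ 0})
    (hmin : ∀ ij ∈ E, ρmin ≤ entryNorm K ij.1 ij.2)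
    (hΔ : l1Norm (fun f => Khat f - K f) < ρmin / 2) :
    {ij : Fin p × Fin p | ij.1 ≠ ij.2 ∧ ρmin / 2 ≤ entryNorm Khat ij.1 ij.2} = E :=
  stmt_13_general p F ρmin K Khat E hE hmin hΔ
end
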